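/- Suppose the Gabor system (g,1,1) is a frame for L²(ℝ) with frame bounds A, B, let 0 < R < A, and let f : ℝ → ℂ be measurable with f − 1 ∈ L^∞_1(ℓ₂) and ‖f − 1‖²_{L^∞_1(ℓ₂)} ≤ R/B. Then the Gabor system (fg, 1, 1) is a frame for L²(ℝ), with frame bounds A(1 − √(R/A))² and B(1 + √(R/A))². -/

import Mathlib

open MeasureTheory Filter

/-- The `1/b`-periodized square sum `∑_{k∈ℤ} |f(x - k/b)|²` (valued in `ℝ≥0∞`). -/
noncomputable def sqSumFn (b : ℝ) (f : ℝ → ℂ) (x : ℝ) : ENNReal :=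
  ∑' k : ℤ, (‖f (x - k / b)‖₊ : ENNReal) ^ 2

/-- The squared norm of `L^∞_{1/b}(ℓ₂)`:
`‖f‖² = esssup_{x ∈ [0,1/b]} ∑_{k∈ℤ} |f(x - k/b)|²`. -/
noncomputable def linfSqNorm (b : ℝ) (f : ℝ → ℂ) : ENNReal :=
  essSup (sqSumFn b f) (volume.restrict (Set.Icc 0 (1 / b)))

/-- Membership in `L^∞_{1/b}(ℓ₂)`: a measurable function with finite norm. -/
def MemLinfL2 (b : ℝ) (f : ℝ → ℂ) : Prop :=
  Measurable f ∧ linfSqNorm b f ≠ ⊤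

/-- The Gabor coefficient `⟨f, E_{mb} T_{na} g⟩` in `L²(ℝ)`. -/
noncomputable def gaborCoef (g : ℝ → ℂ) (a b : ℝ) (f : ℝ → ℂ) (m n : ℤ) : ℂ :=
  ∫ x : ℝ, f x * (starRingEnd ℂ)
      (Complex.exp (2 * (Real.pi : ℂ) * Complex.I * (m : ℂ) * (b : ℂ) * (x : ℂ)) *
        g (x - (n : ℝ) * a))

/-- `∑_{m,n ∈ ℤ} |⟨f, E_{mb} T_{na} g⟩|²` (valued in `ℝ≥0∞`). -/
noncomputable def gaborSum (g : ℝ → ℂ) (a b : ℝ) (f : ℝ → ℂ) : ENNReal :=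
  ∑' p : ℤ × ℤ, (‖gaborCoef g a b f p.1 p.2‖₊ : ENNReal) ^ 2

/-- The squared `L²(ℝ)` norm `∫ |f|²` (valued in `ℝ≥0∞`). -/
noncomputable def l2sq (f : ℝ → ℂ) : ENNReal := ∫⁻ x : ℝ, (‖f x‖₊ : ENNReal) ^ 2

/-- The Gabor system `(g,a,b)` is a frame for `L²(ℝ)` with bounds `A, B`. -/
def GaborFrame (g : ℝ → ℂ) (a b A B : ℝ) : Prop :=
  ∀ f : ℝ → ℂ, MemLp f 2 volume →
    ENNReal.ofReal A * l2sq f ≤ gaborSum g a b f ∧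
      gaborSum g a b f ≤ ENNReal.ofReal B * l2sq f

/-- The Gabor system `(g,a,b)` is a Bessel system with upper frame bound `B`. -/
def GaborBessel (g : ℝ → ℂ) (a b B : ℝ) : Prop :=
  ∀ f : ℝ → ℂ, MemLp f 2 volume → gaborSum g a b f ≤ ENNReal.ofReal B * l2sq f

/-! ### Auxiliary lemmas -/

-- Minkowski's inequality for ℓ² sums over `ℤ × ℤ`.
lemma tsum_sq_minkowski (a b : ℤ × ℤ → ℂ) :
    (∑' p, (‖a p + b p‖₊ : ENNReal) ^ 2) ^ (1/2 : ℝ) ≤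
      (∑' p, (‖a p‖₊ : ENNReal) ^ 2) ^ (1/2 : ℝ) +
      (∑' p, (‖b p‖₊ : ENNReal) ^ 2) ^ (1/2 : ℝ) := by
  have key := ENNReal.lintegral_Lp_add_le (μ := Measure.count (α := ℤ × ℤ))
    (f := fun p => (‖a p‖₊ : ENNReal)) (g := fun p => (‖b p‖₊ : ENNReal))
    (measurable_of_countable _).aemeasurable (measurable_of_countable _).aemeasurable
    (by norm_num : (1:ℝ) ≤ 2)
  simp only [lintegral_count, Pi.add_apply, ENNReal.rpow_two] at key
  refine le_trans ?_ key
  refine ENNReal.rpow_le_rpow ?_ (by norm_num)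
  refine ENNReal.tsum_le_tsum fun p => ?_
  have : (‖a p + b p‖₊ : ENNReal) ≤ (‖a p‖₊ : ENNReal) + (‖b p‖₊ : ENNReal) := by
    exact_mod_cast nnnorm_add_le _ _
  exact pow_le_pow_left' this 2

lemma l2sq_eq (f : ℝ → ℂ) : l2sq f = eLpNorm f 2 volume ^ (2:ℝ) := by
  rw [eLpNorm_eq_lintegral_rpow_enorm_toReal (two_ne_zero) (ENNReal.ofNat_ne_top), ← ENNReal.rpow_mul]
  rw [l2sq]
  simp_rw [← ENNReal.rpow_two]
  norm_num
  rfl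

lemma l2sq_ne_top {f : ℝ → ℂ} (hf : MemLp f 2 volume) : l2sq f ≠ ⊤ := by
  rw [l2sq_eq]
  exact ENNReal.rpow_ne_top_of_nonneg (by norm_num) hf.2.ne

lemma memℒp_of_l2sq {f : ℝ → ℂ} (hm : AEStronglyMeasurable f volume) (hf : l2sq f ≠ ⊤) :
    MemLp f 2 volume := by
  refine ⟨hm, ?_⟩
  rw [eLpNorm_eq_lintegral_rpow_enorm_toReal (two_ne_zero) (ENNReal.ofNat_ne_top)]
  refine ENNReal.rpow_lt_top_of_nonneg (by norm_num) ?_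
  rw [l2sq] at hf
  simp only [ENNReal.toReal_ofNat]
  simp_rw [← ENNReal.rpow_two] at hf
  exact hf

lemma sqSumFn_measurable (k : ℝ → ℂ) (hk : Measurable k) : Measurable (sqSumFn 1 k) := by
  apply Measurable.ennreal_tsum
  intro j
  exact ((hk.comp (measurable_id.sub_const _)).nnnorm.coe_nnreal_ennreal).pow_const 2

lemma sqSumFn_periodic (k : ℝ → ℂ) (j : ℤ) (x : ℝ) :
    sqSumFn 1 k (x + j) = sqSumFn 1 k x := by
  unfold sqSumFn
  rw [← (Equiv.addRight j).tsum_eq (fun i : ℤ => (‖k (x + j - i / 1)‖₊ : ENNReal) ^ 2)]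
  refine tsum_congr fun i => ?_
  congr 2
  simp only [Equiv.coe_addRight]
  push_cast
  ring_nf

lemma ae_sqSumFn_le (k : ℝ → ℂ) (hk : Measurable k) {c : ENNReal}
    (hc : linfSqNorm 1 k ≤ c) : ∀ᵐ x : ℝ, sqSumFn 1 k x ≤ c := by
  have msq : Measurable (sqSumFn 1 k) := sqSumFn_measurable k hk
  set Bad := {x : ℝ | ¬ sqSumFn 1 k x ≤ c} with hBad
  have hBadm : MeasurableSet Bad := by
    have heq : Bad = {x : ℝ | c < sqSumFn 1 k x} := by
      ext x; simp only [hBad, Set.mem_setOf_eq, not_le]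
    rw [heq]
    exact measurableSet_lt measurable_const msq
  have h0 : volume (Bad ∩ Set.Icc 0 1) = 0 := by
    have h1 : ∀ᵐ x ∂(volume.restrict (Set.Icc (0:ℝ) (1/1))), sqSumFn 1 k x ≤ c :=
      (ENNReal.ae_le_essSup _).mono fun x hx => hx.trans hc
    rw [show (1/1 : ℝ) = 1 by norm_num] at h1
    have := ae_iff.mp h1
    rwa [Measure.restrict_apply hBadm] at this
  have hper : ∀ (j : ℤ) (x : ℝ), (x + j ∈ Bad) ↔ x ∈ Bad := by
    intro j x
    simp only [hBad, Set.mem_setOf_eq, sqSumFn_periodic k j x]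
  have cover : Bad ⊆ ⋃ j : ℤ, Bad ∩ Set.Ico (j : ℝ) (j + 1) := by
    intro x hx
    exact Set.mem_iUnion.mpr ⟨⌊x⌋, hx, Int.floor_le x, Int.lt_floor_add_one x⟩
  have hzero : ∀ j : ℤ, volume (Bad ∩ Set.Ico (j : ℝ) (j + 1)) = 0 := by
    intro j
    have := measure_preimage_add_right volume (j : ℝ) (Bad ∩ Set.Ico (j : ℝ) (j + 1))
    rw [← this]
    have hset : (fun x : ℝ => x + (j:ℝ)) ⁻¹' (Bad ∩ Set.Ico (j : ℝ) (j + 1)) =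
        Bad ∩ Set.Ico (0:ℝ) 1 := by
      ext x
      simp only [Set.mem_preimage, Set.mem_inter_iff, Set.mem_Ico, hper j x]
      constructor
      · rintro ⟨h1, h2, h3⟩; exact ⟨h1, by linarith, by linarith⟩
      · rintro ⟨h1, h2, h3⟩; exact ⟨h1, by linarith, by linarith⟩
    rw [hset]
    exact measure_mono_null (Set.inter_subset_inter_right _ Set.Ico_subset_Icc_self) h0
  have : volume Bad = 0 := by
    refine measure_mono_null cover ?_
    exact measure_iUnion_null hzero
  exact ae_iff.mpr this

/-- The conjugated modulation-translation factor appearing in `gaborCoef` (for `a = b = 1`). -/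
noncomputable def W (g : ℝ → ℂ) (m n : ℤ) (x : ℝ) : ℂ :=
  (starRingEnd ℂ) (Complex.exp (2 * (Real.pi : ℂ) * Complex.I * (m : ℂ) * ((1:ℝ) : ℂ) * (x : ℂ)) *
        g (x - (n : ℝ) * 1))

lemma gaborCoef_eq (g f : ℝ → ℂ) (m n : ℤ) :
    gaborCoef g 1 1 f m n = ∫ x : ℝ, f x * W g m n x := rfl

lemma norm_W (g : ℝ → ℂ) (m n : ℤ) (x : ℝ) : ‖W g m n x‖ = ‖g (x - n)‖ := by
  unfold W
  rw [RCLike.norm_conj, norm_mul]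
  have : Complex.exp (2 * (Real.pi : ℂ) * Complex.I * (m : ℂ) * ((1:ℝ) : ℂ) * (x : ℂ)) =
      Complex.exp (((2 * Real.pi * m * x : ℝ) : ℂ) * Complex.I) := by
    congr 1
    push_cast
    ring
  rw [this, Complex.norm_exp_ofReal_mul_I, one_mul, mul_one]

lemma memℒp_translate {g : ℝ → ℂ} (hg : MemLp g 2 volume) (n : ℤ) :
    MemLp (fun x : ℝ => g (x - (n:ℝ))) 2 volume := by
  have : (fun x : ℝ => g (x - (n:ℝ))) = g ∘ (fun x : ℝ => x + (-(n:ℝ))) := by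
    funext x; simp [sub_eq_add_neg]
  rw [this]
  exact hg.comp_measurePreserving (measurePreserving_add_right volume _)

lemma memℒp_W {g : ℝ → ℂ} (hg : MemLp g 2 volume) (m n : ℤ) :
    MemLp (W g m n) 2 volume := by
  have hts := memℒp_translate hg n
  refine MemLp.of_le hts ?_ ?_
  · unfold W
    refine Continuous.comp_aestronglyMeasurable (Complex.continuous_conj) ?_
    refine AEStronglyMeasurable.mul ?_ ?_
    · exact (Complex.continuous_exp.comp (by continuity)).aestronglyMeasurable
    · have : (fun x : ℝ => g (x - (n:ℝ) * 1)) = g ∘ (fun x : ℝ => x + (-((n:ℝ) * 1))) := by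
        funext x; simp [sub_eq_add_neg]
      rw [this]
      exact (hg.comp_measurePreserving (measurePreserving_add_right volume _)).1
  · refine Eventually.of_forall fun x => ?_
    rw [norm_W]

lemma integrable_mul_L2 {u w : ℝ → ℂ} (hu : MemLp u 2 volume) (hw : MemLp w 2 volume) :
    Integrable (fun x => u x * w x) volume := by
  have h := hw.smul (φ := u) hu (p := 2) (q := 2) (r := 1)
  rw [← memLp_one_iff_integrable]
  exact h

lemma gaborCoef_mul (g k f : ℝ → ℂ) (m n : ℤ) :
    gaborCoef (fun x => k x * g x) 1 1 f m n =
      gaborCoef g 1 1 (fun x => f x * (starRingEnd ℂ) (k (x - (n:ℝ)))) m n := by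
  rw [gaborCoef_eq]
  unfold gaborCoef W
  congr 1
  funext x
  simp only [map_mul]
  have : ((n:ℝ) * 1 : ℝ) = (n : ℝ) := mul_one _
  rw [this]
  ring

lemma gaborCoef_add_window {g k f : ℝ → ℂ} (m n : ℤ) (hg : MemLp g 2 volume)
    (hf : MemLp f 2 volume)
    (hfk : MemLp (fun x => f x * (starRingEnd ℂ) (k (x - (n:ℝ)))) 2 volume) :
    gaborCoef (fun x => (1 + k x) * g x) 1 1 f m n =
      gaborCoef g 1 1 f m n + gaborCoef (fun x => k x * g x) 1 1 f m n := by
  have I1 : Integrable (fun x => f x * W g m n x) volume :=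
    integrable_mul_L2 hf (memℒp_W hg m n)
  have I2 : Integrable (fun x => (f x * (starRingEnd ℂ) (k (x - (n:ℝ)))) * W g m n x) volume :=
    integrable_mul_L2 hfk (memℒp_W hg m n)
  have key : gaborCoef (fun x => (1 + k x) * g x) 1 1 f m n =
      ∫ x : ℝ, (f x * W g m n x + (f x * (starRingEnd ℂ) (k (x - (n:ℝ)))) * W g m n x) := by
    unfold gaborCoef W
    congr 1
    funext x
    simp only [map_mul, map_add, map_one]
    have : ((n:ℝ) * 1 : ℝ) = (n : ℝ) := mul_one _
    rw [this]
    ring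
  rw [key, integral_add I1 I2, gaborCoef_eq, gaborCoef_mul, gaborCoef_eq]

lemma nnnorm_mul_conj (h k : ℝ → ℂ) (n : ℤ) (x : ℝ) :
    (‖h x * (starRingEnd ℂ) (k (x - (n:ℝ)))‖₊ : ENNReal) ^ 2 =
      (‖h x‖₊ : ENNReal) ^ 2 * (‖k (x - (n:ℝ))‖₊ : ENNReal) ^ 2 := by
  rw [nnnorm_mul, RCLike.nnnorm_conj, ENNReal.coe_mul, mul_pow]

lemma besselK (g k : ℝ → ℂ) (hk : Measurable k)
    (B : ℝ)
    (hbessel : ∀ u : ℝ → ℂ, MemLp u 2 volume →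
      gaborSum g 1 1 u ≤ ENNReal.ofReal B * l2sq u)
    {c : ENNReal} (hc : linfSqNorm 1 k ≤ c) (hcfin : c ≠ ⊤)
    (h : ℝ → ℂ) (hh : MemLp h 2 volume) :
    gaborSum (fun x => k x * g x) 1 1 h ≤ ENNReal.ofReal B * (c * l2sq h) := by
  have hae : ∀ᵐ x : ℝ, sqSumFn 1 k x ≤ c := ae_sqSumFn_le k hk hc
  set hn : ℤ → ℝ → ℂ := fun n x => h x * (starRingEnd ℂ) (k (x - (n:ℝ))) with hhn
  have hterm : ∀ (n : ℤ), ∀ᵐ x : ℝ, (‖k (x - (n:ℝ))‖₊ : ENNReal) ^ 2 ≤ c := by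
    intro n
    refine hae.mono fun x hx => le_trans ?_ hx
    have := ENNReal.le_tsum (f := fun j : ℤ => (‖k (x - j / 1)‖₊ : ENNReal) ^ 2) n
    simpa [sqSumFn, div_one] using this
  have hl2n : ∀ n : ℤ, l2sq (hn n) ≤ c * l2sq h := by
    intro n
    have : l2sq (hn n) ≤ ∫⁻ x : ℝ, c * (‖h x‖₊ : ENNReal) ^ 2 := by
      unfold l2sq
      refine lintegral_mono_ae ?_
      refine (hterm n).mono fun x hx => ?_
      rw [nnnorm_mul_conj]
      calc (‖h x‖₊ : ENNReal) ^ 2 * (‖k (x - (n:ℝ))‖₊ : ENNReal) ^ 2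
          ≤ (‖h x‖₊ : ENNReal) ^ 2 * c := mul_le_mul_right hx _
        _ = c * (‖h x‖₊ : ENNReal) ^ 2 := mul_comm _ _
    calc l2sq (hn n) ≤ ∫⁻ x : ℝ, c * (‖h x‖₊ : ENNReal) ^ 2 := this
      _ = c * l2sq h := lintegral_const_mul' c _ hcfin
  have hmem : ∀ n : ℤ, MemLp (hn n) 2 volume := by
    intro n
    refine memℒp_of_l2sq ?_ ?_
    · refine hh.1.mul ?_
      have : Measurable fun x : ℝ => (starRingEnd ℂ) (k (x - (n:ℝ))) :=
        (Complex.continuous_conj.measurable).comp (hk.comp (measurable_id.sub_const _))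
      exact this.aestronglyMeasurable
    · exact ne_top_of_le_ne_top (ENNReal.mul_ne_top hcfin (l2sq_ne_top hh)) (hl2n n)
  have hsum : ∑' n : ℤ, l2sq (hn n) ≤ c * l2sq h := by
    have hmeas : ∀ n : ℤ, AEMeasurable
        (fun x : ℝ => (‖hn n x‖₊ : ENNReal) ^ 2) volume := by
      intro n
      exact ((hmem n).1.aemeasurable.enorm.pow_const 2)
    calc ∑' n : ℤ, l2sq (hn n)
        = ∫⁻ x : ℝ, ∑' n : ℤ, (‖hn n x‖₊ : ENNReal) ^ 2 := (lintegral_tsum hmeas).symm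
      _ = ∫⁻ x : ℝ, (‖h x‖₊ : ENNReal) ^ 2 * sqSumFn 1 k x := by
          refine lintegral_congr fun x => ?_
          rw [sqSumFn]
          rw [← ENNReal.tsum_mul_left]
          refine tsum_congr fun n => ?_
          rw [hhn]
          simp only [div_one]
          exact nnnorm_mul_conj h k n x
      _ ≤ ∫⁻ x : ℝ, (‖h x‖₊ : ENNReal) ^ 2 * c := by
          refine lintegral_mono_ae (hae.mono fun x hx => ?_)
          exact mul_le_mul_right hx _
      _ = c * l2sq h := by
          simp_rw [mul_comm]
          exact lintegral_const_mul' c _ hcfin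
  calc gaborSum (fun x => k x * g x) 1 1 h
      = ∑' p : ℤ × ℤ, (‖gaborCoef g 1 1 (hn p.2) p.1 p.2‖₊ : ENNReal) ^ 2 := by
        unfold gaborSum
        exact tsum_congr fun p => by rw [gaborCoef_mul]
    _ = ∑' n : ℤ, ∑' m : ℤ, (‖gaborCoef g 1 1 (hn n) m n‖₊ : ENNReal) ^ 2 := by
        rw [ENNReal.tsum_prod']
        exact ENNReal.tsum_comm
    _ ≤ ∑' n : ℤ, gaborSum g 1 1 (hn n) := by
        refine ENNReal.tsum_le_tsum fun n => ?_
        unfold gaborSum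
        have hinj : Function.Injective (fun m : ℤ => ((m, n) : ℤ × ℤ)) := by
          intro a b hab
          simpa using congrArg Prod.fst hab
        exact ENNReal.tsum_comp_le_tsum_of_injective hinj
          (fun p : ℤ × ℤ => (‖gaborCoef g 1 1 (hn n) p.1 p.2‖₊ : ENNReal) ^ 2)
    _ ≤ ∑' n : ℤ, ENNReal.ofReal B * l2sq (hn n) :=
        ENNReal.tsum_le_tsum fun n => hbessel (hn n) (hmem n)
    _ = ENNReal.ofReal B * ∑' n : ℤ, l2sq (hn n) := ENNReal.tsum_mul_left
    _ ≤ ENNReal.ofReal B * (c * l2sq h) := mul_le_mul_right hsum _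

lemma sqrt_mul_ofReal {t : ℝ} (ht : 0 < t) (N : ENNReal) :
    (ENNReal.ofReal t * N) ^ (1/2 : ℝ) = ENNReal.ofReal (Real.sqrt t) * N ^ (1/2 : ℝ) := by
  rw [ENNReal.mul_rpow_of_nonneg _ _ (by norm_num : (0:ℝ) ≤ 1/2)]
  congr 1
  rw [ENNReal.ofReal_rpow_of_pos ht, Real.sqrt_eq_rpow]

lemma memℒp_mul_conj_translate {k h : ℝ → ℂ} (hk : Measurable k) (hh : MemLp h 2 volume)
    {c : ENNReal} (hc : linfSqNorm 1 k ≤ c) (hcfin : c ≠ ⊤) (n : ℤ) :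
    MemLp (fun x => h x * (starRingEnd ℂ) (k (x - (n:ℝ)))) 2 volume := by
  have hae : ∀ᵐ x : ℝ, sqSumFn 1 k x ≤ c := ae_sqSumFn_le k hk hc
  have hterm : ∀ᵐ x : ℝ, (‖k (x - (n:ℝ))‖₊ : ENNReal) ^ 2 ≤ c := by
    refine hae.mono fun x hx => le_trans ?_ hx
    have := ENNReal.le_tsum (f := fun j : ℤ => (‖k (x - j / 1)‖₊ : ENNReal) ^ 2) n
    simpa [sqSumFn, div_one] using this
  have hl2n : l2sq (fun x => h x * (starRingEnd ℂ) (k (x - (n:ℝ)))) ≤ c * l2sq h := by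
    have hstep : l2sq (fun x => h x * (starRingEnd ℂ) (k (x - (n:ℝ))))
        ≤ ∫⁻ x : ℝ, c * (‖h x‖₊ : ENNReal) ^ 2 := by
      unfold l2sq
      refine lintegral_mono_ae (hterm.mono fun x hx => ?_)
      rw [nnnorm_mul_conj]
      calc (‖h x‖₊ : ENNReal) ^ 2 * (‖k (x - (n:ℝ))‖₊ : ENNReal) ^ 2
          ≤ (‖h x‖₊ : ENNReal) ^ 2 * c := mul_le_mul_right hx _
        _ = c * (‖h x‖₊ : ENNReal) ^ 2 := mul_comm _ _
    exact hstep.trans (le_of_eq (lintegral_const_mul' c _ hcfin))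
  refine memℒp_of_l2sq ?_ ?_
  · refine hh.1.mul ?_
    have : Measurable fun x : ℝ => (starRingEnd ℂ) (k (x - (n:ℝ))) :=
      (Complex.continuous_conj.measurable).comp (hk.comp (measurable_id.sub_const _))
    exact this.aestronglyMeasurable
  · exact ne_top_of_le_ne_top (ENNReal.mul_ne_top hcfin (l2sq_ne_top hh)) hl2n

/-- Multiplicative perturbation theorem. -/
theorem multiplicative_perturbation (g : ℝ → ℂ) (hg : MemLp g 2 volume)
    (A B R : ℝ) (hA : 0 < A) (hB : 0 < B) (hframe : GaborFrame g 1 1 A B)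
    (hR : 0 < R) (hRA : R < A)
    (f : ℝ → ℂ) (hfm : Measurable f)
    (hf1 : linfSqNorm 1 (fun x => f x - 1) ≤ ENNReal.ofReal (R / B)) :
    GaborFrame (fun x => f x * g x) 1 1
      (A * (1 - Real.sqrt (R / A)) ^ 2) (B * (1 + Real.sqrt (R / A)) ^ 2) := by
  have hAB : A ≤ B := by
    set χ : ℝ → ℂ := (Set.Icc (0:ℝ) 1).indicator (fun _ => (1:ℂ)) with hχ
    have hχm : MemLp χ 2 volume :=
      memLp_indicator_const 2 measurableSet_Icc 1 (Or.inr (by simp))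
    have hχ2 : l2sq χ = 1 := by
      unfold l2sq
      have heq : ∀ x : ℝ, (‖χ x‖₊ : ENNReal) ^ 2
          = (Set.Icc (0:ℝ) 1).indicator (fun _ => (1:ENNReal)) x := by
        intro x
        by_cases hx : x ∈ Set.Icc (0:ℝ) 1 <;>
          simp [hχ, Set.indicator_of_mem, Set.indicator_of_notMem, hx]
      simp_rw [heq]
      rw [lintegral_indicator measurableSet_Icc]
      simp [Real.volume_Icc]
    obtain ⟨hlow, hup⟩ := hframe χ hχm
    have hle := le_trans hlow hup
    rw [hχ2, mul_one, mul_one] at hle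
    exact (ENNReal.ofReal_le_ofReal_iff hB.le).mp hle
  intro h hh
  set t : ℝ := Real.sqrt (R / A) with htdef
  have ht0 : 0 ≤ t := Real.sqrt_nonneg _
  have ht1 : t < 1 := by
    have h1 : R / A < 1 := (div_lt_one hA).mpr hRA
    have := Real.sqrt_lt_sqrt (by positivity) h1
    rwa [Real.sqrt_one] at this
  set k : ℝ → ℂ := fun x => f x - 1 with hkdef
  have hkm : Measurable k := hfm.sub measurable_const
  have hN : l2sq h ≠ ⊤ := l2sq_ne_top hh
  have hNr : l2sq h ^ (1/2:ℝ) ≠ ⊤ := ENNReal.rpow_ne_top_of_nonneg (by norm_num) hN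
  have hGb := hframe h hh
  -- Bessel bound for the perturbed window
  have hK : gaborSum (fun x => k x * g x) 1 1 h ≤ ENNReal.ofReal R * l2sq h := by
    have hbd := besselK g k hkm B (fun u hu => (hframe u hu).2) hf1 ENNReal.ofReal_ne_top h hh
    refine hbd.trans (le_of_eq ?_)
    rw [← mul_assoc, ← ENNReal.ofReal_mul hB.le]
    congr 2
    field_simp
  -- MemLp of modified test functions
  have hmemn : ∀ n : ℤ, MemLp (fun x => h x * (starRingEnd ℂ) (k (x - (n:ℝ)))) 2 volume :=
    fun n => memℒp_mul_conj_translate hkm hh hf1 ENNReal.ofReal_ne_top n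
  -- coefficient decomposition
  have hwin : (fun x => f x * g x) = (fun x => (1 + k x) * g x) := by
    funext x; simp only [hkdef]; ring
  have hadd : ∀ p : ℤ × ℤ, gaborCoef (fun x => f x * g x) 1 1 h p.1 p.2 =
      gaborCoef g 1 1 h p.1 p.2 + gaborCoef (fun x => k x * g x) 1 1 h p.1 p.2 := by
    intro p
    rw [hwin]
    exact gaborCoef_add_window p.1 p.2 hg hh (hmemn p.2)
  -- Minkowski inequalities
  have hSup2 : gaborSum (fun x => f x * g x) 1 1 h ^ (1/2:ℝ) ≤
      gaborSum g 1 1 h ^ (1/2:ℝ) + gaborSum (fun x => k x * g x) 1 1 h ^ (1/2:ℝ) := by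
    have hmink := tsum_sq_minkowski (fun p => gaborCoef g 1 1 h p.1 p.2)
      (fun p => gaborCoef (fun x => k x * g x) 1 1 h p.1 p.2)
    refine le_trans (le_of_eq ?_) hmink
    congr 1
    unfold gaborSum
    exact tsum_congr fun p => by rw [hadd p]
  have hlow2 : gaborSum g 1 1 h ^ (1/2:ℝ) ≤
      gaborSum (fun x => f x * g x) 1 1 h ^ (1/2:ℝ) +
      gaborSum (fun x => k x * g x) 1 1 h ^ (1/2:ℝ) := by
    have hmink := tsum_sq_minkowski (fun p => gaborCoef (fun x => f x * g x) 1 1 h p.1 p.2)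
      (fun p => -(gaborCoef (fun x => k x * g x) 1 1 h p.1 p.2))
    have e1 : gaborSum g 1 1 h = ∑' p : ℤ × ℤ,
        (‖gaborCoef (fun x => f x * g x) 1 1 h p.1 p.2 +
          -(gaborCoef (fun x => k x * g x) 1 1 h p.1 p.2)‖₊ : ENNReal) ^ 2 := by
      unfold gaborSum
      refine tsum_congr fun p => ?_
      rw [show gaborCoef g 1 1 h p.1 p.2 =
          gaborCoef (fun x => f x * g x) 1 1 h p.1 p.2 +
            -(gaborCoef (fun x => k x * g x) 1 1 h p.1 p.2) from by rw [hadd p]; ring]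
    have e2 : (∑' p : ℤ × ℤ,
        (‖-(gaborCoef (fun x => k x * g x) 1 1 h p.1 p.2)‖₊ : ENNReal) ^ 2) =
        gaborSum (fun x => k x * g x) 1 1 h := by
      unfold gaborSum
      exact tsum_congr fun p => by rw [nnnorm_neg]
    rw [e1]
    refine le_trans hmink (le_of_eq ?_)
    rw [e2]
    rfl
  -- square-root bounds
  have hKs : gaborSum (fun x => k x * g x) 1 1 h ^ (1/2:ℝ) ≤
      ENNReal.ofReal (Real.sqrt R) * l2sq h ^ (1/2:ℝ) := by
    refine le_trans (ENNReal.rpow_le_rpow hK (by norm_num)) (le_of_eq ?_)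
    exact sqrt_mul_ofReal hR _
  have hGs : gaborSum g 1 1 h ^ (1/2:ℝ) ≤
      ENNReal.ofReal (Real.sqrt B) * l2sq h ^ (1/2:ℝ) := by
    refine le_trans (ENNReal.rpow_le_rpow hGb.2 (by norm_num)) (le_of_eq ?_)
    exact sqrt_mul_ofReal hB _
  have hGs' : ENNReal.ofReal (Real.sqrt A) * l2sq h ^ (1/2:ℝ) ≤
      gaborSum g 1 1 h ^ (1/2:ℝ) := by
    refine le_trans (le_of_eq (sqrt_mul_ofReal hA _).symm) ?_
    exact ENNReal.rpow_le_rpow hGb.1 (by norm_num)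
  constructor
  · -- lower bound
    have hposA2 : 0 < A * (1 - t) ^ 2 := mul_pos hA (pow_pos (by linarith) 2)
    refine (ENNReal.rpow_le_rpow_iff (by norm_num : (0:ℝ) < 1/2)).mp ?_
    rw [sqrt_mul_ofReal hposA2]
    have hsq : Real.sqrt (A * (1 - t) ^ 2) = Real.sqrt A - Real.sqrt R := by
      rw [Real.sqrt_mul hA.le, Real.sqrt_sq (by linarith)]
      rw [mul_sub, mul_one]
      congr 1
      rw [htdef, ← Real.sqrt_mul hA.le]
      congr 1
      field_simp
    rw [hsq]
    have hcancel : ENNReal.ofReal (Real.sqrt A - Real.sqrt R) * l2sq h ^ (1/2:ℝ) +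
        ENNReal.ofReal (Real.sqrt R) * l2sq h ^ (1/2:ℝ) =
        ENNReal.ofReal (Real.sqrt A) * l2sq h ^ (1/2:ℝ) := by
      rw [← add_mul, ← ENNReal.ofReal_add (by
        have := Real.sqrt_le_sqrt hRA.le
        linarith) (Real.sqrt_nonneg _), sub_add_cancel]
    have hchain : ENNReal.ofReal (Real.sqrt A) * l2sq h ^ (1/2:ℝ) ≤
        gaborSum (fun x => f x * g x) 1 1 h ^ (1/2:ℝ) +
          ENNReal.ofReal (Real.sqrt R) * l2sq h ^ (1/2:ℝ) :=
      le_trans hGs' (le_trans hlow2 (add_le_add_right hKs _))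
    exact (ENNReal.add_le_add_iff_right
      (a := ENNReal.ofReal (Real.sqrt R) * l2sq h ^ (1/2:ℝ))
      (ENNReal.mul_ne_top ENNReal.ofReal_ne_top hNr)).mp (by rw [hcancel]; exact hchain)
  · -- upper bound
    have hposB2 : 0 < B * (1 + t) ^ 2 := mul_pos hB (pow_pos (by linarith) 2)
    refine (ENNReal.rpow_le_rpow_iff (by norm_num : (0:ℝ) < 1/2)).mp ?_
    rw [sqrt_mul_ofReal hposB2]
    calc gaborSum (fun x => f x * g x) 1 1 h ^ (1/2:ℝ)
        ≤ gaborSum g 1 1 h ^ (1/2:ℝ) + gaborSum (fun x => k x * g x) 1 1 h ^ (1/2:ℝ) := hSup2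
      _ ≤ ENNReal.ofReal (Real.sqrt B) * l2sq h ^ (1/2:ℝ) +
          ENNReal.ofReal (Real.sqrt R) * l2sq h ^ (1/2:ℝ) := add_le_add hGs hKs
      _ = ENNReal.ofReal (Real.sqrt B + Real.sqrt R) * l2sq h ^ (1/2:ℝ) := by
          rw [ENNReal.ofReal_add (Real.sqrt_nonneg _) (Real.sqrt_nonneg _), add_mul]
      _ ≤ ENNReal.ofReal (Real.sqrt (B * (1 + t) ^ 2)) * l2sq h ^ (1/2:ℝ) := by
          refine mul_le_mul_left (ENNReal.ofReal_le_ofReal ?_) _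
          have h1 : Real.sqrt (B * (1 + t) ^ 2) = Real.sqrt B * (1 + t) := by
            rw [Real.sqrt_mul hB.le, Real.sqrt_sq (by linarith)]
          rw [h1, mul_add, mul_one]
          have h2 : Real.sqrt R ≤ Real.sqrt B * t := by
            rw [htdef, ← Real.sqrt_mul hB.le]
            refine Real.sqrt_le_sqrt ?_
            have h3 : B * (R / A) = (B * R) / A := by ring
            rw [h3, le_div_iff₀ hA]
            nlinarith
          linarith
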